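/- arXiv:2105.11568 — 3 statements merged into one kernel-verified Lean document; each statement's English description precedes it below -/
import Mathlib

section
/- Let γ = ρ_k ∘ ... ∘ ρ_1 be the Coxeter element acting on weakly increasing k-tuples with entries in {0,...,n−1} (with conventions x₀ = 0, x_{k+1} = n−1). Then γ^{k+1} = id. -/
/-!
Record a tuple by its first entry `x₀` and its gap vector `dᵢ = xᵢ₊₁ - xᵢ` (`0 ≤ i ≤ k`).
The reflection `ρᵢ` fixes `x₀` and swaps the adjacent gaps `dᵢ₋₁, dᵢ`, so the product
`γ = ρ_k ∘ ⋯ ∘ ρ₁` of these transpositions rotates the `k + 1` gaps cyclically, and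
`γ^{k+1}` fixes both `x₀` and every gap.
-/

/-- The reflection `ρ_i` acting on extended tuples `(x₀, x₁, ..., x_k, x_{k+1})`. -/
def rho (k : ℕ) (i : Fin k) (x : Fin (k + 2) → ℝ) : Fin (k + 2) → ℝ :=
  fun j =>
    if j.val = i.val + 1 then
      x ⟨i.val, by omega⟩ + x ⟨i.val + 2, by omega⟩ - x ⟨i.val + 1, by omega⟩
    else x j

/-- `gammaAux k m = ρ_m ∘ ⋯ ∘ ρ_2 ∘ ρ_1` (1-based numbering; `ρ_1` acts first). -/
def gammaAux (k : ℕ) : ℕ → (Fin (k + 2) → ℝ) → Fin (k + 2) → ℝ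
  | 0 => id
  | m + 1 => if h : m < k then rho k ⟨m, h⟩ ∘ gammaAux k m else gammaAux k m

/-- The Coxeter element `γ = ρ_k ∘ ⋯ ∘ ρ_1`. -/
def gammaMap (k : ℕ) : (Fin (k + 2) → ℝ) → Fin (k + 2) → ℝ := gammaAux k k

/-- Membership in `X`: weakly increasing tuples with `x₀ = 0`, `x_{k+1} = n - 1`. -/
def inX (n k : ℕ) (x : Fin (k + 2) → ℝ) : Prop :=
  Monotone x ∧ x 0 = 0 ∧ x (Fin.last (k + 1)) = (n : ℝ) - 1

open Equiv

theorem Fin.cycleRange_succ {n : ℕ} (i : Fin n) :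
    cycleRange i.succ = cycleRange i.castSucc * swap i.castSucc i.succ := by
  ext j
  rw [Perm.mul_apply, swap_apply_def]
  have hi := i.castSucc_lt_succ
  split_ifs with hj₁ hj₂
  · subst hj₁
    rw [cycleRange_of_gt hi, coe_cycleRange_of_lt hi]
    simp
  · subst hj₂
    simp
  · rcases lt_or_gt_of_ne hj₁ with hj | hj
    · rw [coe_cycleRange_of_lt hj, coe_cycleRange_of_lt (hj.trans hi)]
    · have hj' : i.succ < j := by
        simp only [Fin.lt_def, Fin.ext_iff, Fin.val_succ, Fin.val_castSucc] at hj hj₂ ⊢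
        omega
      rw [cycleRange_of_gt hj, cycleRange_of_gt hj']

def gaps {G : Type*} [AddGroup G] {n : ℕ} (x : Fin (n + 1) → G) : Fin n → G :=
  fun i => x i.succ - x i.castSucc

theorem eq_of_gaps_eq {G : Type*} [AddGroup G] {n : ℕ} {x y : Fin (n + 1) → G}
    (h₀ : x 0 = y 0) (h : gaps x = gaps y) : x = y := by
  funext j
  induction j using Fin.induction with
  | zero => exact h₀
  | succ i ih =>
    calc x i.succ = gaps x i + x i.castSucc := (sub_add_cancel _ _).symm
      _ = gaps y i + y i.castSucc := by rw [h, ih]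
      _ = y i.succ := sub_add_cancel _ _

section

variable (k : ℕ) (x : Fin (k + 2) → ℝ)

theorem rho_apply_zero (i : Fin k) : rho k i x 0 = x 0 :=
  if_neg (by simp)

theorem gaps_rho (i : Fin k) : gaps (rho k i x) = gaps x ∘ swap i.castSucc i.succ := by
  funext j
  obtain ⟨i, hi⟩ := i
  obtain ⟨j, hj⟩ := j
  simp only [gaps, rho, Function.comp_apply, swap_apply_def, Fin.ext_iff, Fin.succ_mk,
    Fin.castSucc_mk]
  split_ifs <;>
    first | omega | (subst_vars; simp only [Fin.succ_mk, Fin.castSucc_mk] <;> ring_nf)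

theorem gammaAux_apply_zero (m : ℕ) : gammaAux k m x 0 = x 0 := by
  induction m with
  | zero => rfl
  | succ m ih =>
    rw [gammaAux]
    split_ifs
    · rw [Function.comp_apply, rho_apply_zero, ih]
    · exact ih

theorem gaps_gammaAux (m : ℕ) (hm : m ≤ k) :
    gaps (gammaAux k m x) = gaps x ∘ Fin.cycleRange (⟨m, by omega⟩ : Fin (k + 1)) := by
  induction m with
  | zero => simp [gammaAux]
  | succ m ih =>
    have hmk : m < k := hm
    rw [gammaAux, dif_pos hmk, Function.comp_apply, gaps_rho, ih hmk.le,
      ← Fin.castSucc_mk _ _ hmk, ← Fin.succ_mk _ _ hmk, Fin.cycleRange_succ, Perm.coe_mul,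
      Function.comp_assoc]

theorem gaps_gammaMap : gaps (gammaMap k x) = gaps x ∘ finRotate (k + 1) := by
  rw [gammaMap, gaps_gammaAux k x k le_rfl, ← Fin.cycleRange_last, Fin.last]

theorem iterate_gammaMap_apply_zero (m : ℕ) : (gammaMap k)^[m] x 0 = x 0 := by
  induction m with
  | zero => rfl
  | succ m ih =>
    rw [Function.iterate_succ_apply']
    exact (gammaAux_apply_zero k _ k).trans ih

open Fin.NatCast in
theorem gaps_iterate_gammaMap (m : ℕ) (i : Fin (k + 1)) :
    gaps ((gammaMap k)^[m] x) i = gaps x (i + (m : Fin (k + 1))) := by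
  induction m generalizing i with
  | zero => simp
  | succ m ih =>
    rw [Function.iterate_succ_apply', gaps_gammaMap, Function.comp_apply, ih, finRotate_apply,
      Nat.cast_succ, add_assoc, add_comm 1]

end

theorem stmt_10_general (k : ℕ)
    (x : Fin (k + 2) → ℝ) :
    (gammaMap k)^[k + 1] x = x := by
  refine eq_of_gaps_eq (iterate_gammaMap_apply_zero k x (k + 1)) (funext fun i => ?_)
  rw [gaps_iterate_gammaMap, Fin.natCast_self, add_zero]

theorem stmt_10 (n k : ℕ) (hn : 2 ≤ n) (hk : 2 ≤ k)
    (x : Fin (k + 2) → ℝ) (hx : inX n k x) :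
    (gammaMap k)^[k + 1] x = x :=
  stmt_10_general k x
end

section
/- Let X be the set of k-element multisets with elements in ℤ/n (n ≥ 2), and let T : X → X increment each element by 1 mod n. Let g_i(x) denote the i-th smallest element of x (taking representatives in {0,...,n−1}). Then for all i, j with i + j = k + 1, the function g_i + g_j is (n−1)-mesic: for every x ∈ X, (1/n) Σ_{m=0}^{n-1} (g_i(T^m x) + g_j(T^m x)) = n − 1. -/
/-- Rotation: increment every element of the multiset by 1 mod n. -/
def Tmap (n : ℕ) [NeZero n] (x : Multiset (Fin n)) : Multiset (Fin n) :=
  x.map (· + 1)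

/-- `gstat n i x` is the `i`-th smallest element of `x` (1-based), as a real number. -/
def gstat (n : ℕ) [NeZero n] (i : ℕ) (x : Multiset (Fin n)) : ℝ :=
  ((((x.sort (· ≤ ·)).getD (i - 1) 0 : Fin n) : ℕ) : ℝ)

/-!
Write `g_i(y)` as the number of `ℓ ∈ (0, n)` such that fewer than `i` elements of `y` lie below `ℓ`.
Summed over the `n` rotations, `∑ₘ g_i(Tᵐ x)` becomes the number of cyclic arcs of length
`ℓ ∈ (0, n)` containing fewer than `i` elements of `x`. Sending an arc to its complementary arc is
an involution that turns a count `c` into `k - c`, so, as `i + j = k + 1`, the arcs with fewer than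
`i` elements correspond to those with at least `j`. Hence `∑ₘ (g_i + g_j)(Tᵐ x)` counts each of the
`n (n - 1)` arcs exactly once.
-/

open Finset Fin.NatCast

theorem List.SortedLE.countP_le_iff_not_getElem {α : Type*} [Preorder α] {l : List α}
    (hl : l.SortedLE) {p : α → Bool} (hp : ∀ ⦃a b⦄, a ≤ b → p b → p a) {i : ℕ}
    (hi : i < l.length) : l.countP p ≤ i ↔ ¬ p l[i] := by
  constructor
  · intro hcount hpi
    have hprefix : (l.take (i + 1)).countP p = i + 1 := by
      rw [List.countP_eq_length.2, List.length_take, min_eq_left hi]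
      intro a ha
      obtain ⟨t, ht, rfl⟩ := List.mem_take_iff_getElem.1 ha
      exact hp (hl.getElem_le_getElem_of_le (by omega)) hpi
    have := (List.take_sublist (i + 1) l).countP_le (p := p)
    omega
  · intro hpi
    have hsuffix : (l.drop i).countP p = 0 := by
      have hdrop := hl.pairwise.drop (i := i)
      rw [List.drop_eq_getElem_cons hi, List.pairwise_cons] at hdrop
      rw [List.countP_eq_zero, List.drop_eq_getElem_cons hi]
      rintro a (_ | ⟨_, ha⟩)
      · exact hpi
      · exact fun hpa => hpi (hp (hdrop.1 a ha) hpa)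
    have hsplit := List.countP_append (p := p) (l₁ := l.take i) (l₂ := l.drop i)
    rw [List.take_append_drop] at hsplit
    have := (List.countP_le_length (p := p) (l := l.take i)).trans (List.length_take_le i l)
    omega

theorem card_filter_lt_add_card_filter_lt_of_involution {α : Type*} {s : Finset α}
    (σ : α → α) (hσ : ∀ p ∈ s, σ p ∈ s) (hσσ : ∀ p ∈ s, σ (σ p) = p) (f : α → ℕ) {k i j : ℕ}
    (hf : ∀ p ∈ s, f (σ p) + f p = k) (hij : i + j = k + 1) :
    #{p ∈ s | f p < i} + #{p ∈ s | f p < j} = #s := by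
  have hflip : #{p ∈ s | f p < i} = #{p ∈ s | ¬ f p < j} := by
    apply card_nbij' σ σ <;> intro p hp <;> simp only [mem_coe, mem_filter] at hp ⊢
    · have := hf p hp.1
      exact ⟨hσ p hp.1, by omega⟩
    · have := hf (σ p) (hσ p hp.1)
      rw [hσσ p hp.1] at this
      exact ⟨hσ p hp.1, by omega⟩
    · exact hσσ p hp.1
    · exact hσσ p hp.1
  rw [hflip, add_comm, card_filter_add_card_filter_not]

section Rotation

variable {n : ℕ} [NeZero n]

theorem Tmap_iterate (x : Multiset (Fin n)) (m : ℕ) :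
    (Tmap n)^[m] x = x.map (· + (m : Fin n)) := by
  induction m with
  | zero => simp
  | succ m ih =>
    rw [Function.iterate_succ_apply', ih, Tmap, Multiset.map_map]
    congr 1
    ext a
    simp [add_assoc]

theorem gstat_eq_card_filter {y : Multiset (Fin n)} {i : ℕ} (hi : 1 ≤ i)
    (hiy : i ≤ Multiset.card y) :
    gstat n i y = #{ℓ ∈ Ioo 0 n | y.countP (fun a : Fin n => (a : ℕ) < ℓ) < i} := by
  set l := y.sort (· ≤ ·)
  have hlen : i - 1 < l.length := by rw [Multiset.length_sort]; omega
  have hsorted : l.SortedLE := (Multiset.pairwise_sort y _).sortedLE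
  have hl : (l : Multiset (Fin n)) = y := Multiset.sort_eq y _
  have hfilter :
      {ℓ ∈ Ioo 0 n | y.countP (fun a : Fin n => (a : ℕ) < ℓ) < i} = Ioc 0 (l[i - 1] : ℕ) := by
    ext ℓ
    have hcount := hsorted.countP_le_iff_not_getElem
      (p := fun a : Fin n => (a : ℕ) < ℓ) (fun a b hab hb => by simp at hb ⊢; omega) hlen
    simp only [mem_filter, mem_Ioo, mem_Ioc, decide_eq_true_eq] at hcount ⊢
    rw [← hl, Multiset.coe_countP]
    have := (l[i - 1]).isLt
    omega
  rw [gstat, hfilter, Nat.card_Ioc, List.getD_eq_getElem _ _ hlen, Nat.sub_zero]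

theorem countP_val_lt_add_countP_map_sub (y : Multiset (Fin n)) {ℓ : ℕ} (hℓ : ℓ < n) :
    y.countP (fun a : Fin n => (a : ℕ) < ℓ) +
      (y.map (· - (ℓ : Fin n))).countP (fun a : Fin n => (a : ℕ) < n - ℓ) = Multiset.card y := by
  have hval : ((ℓ : Fin n) : ℕ) = ℓ := Fin.val_cast_of_lt hℓ
  have hcompl (a : Fin n) : ((a - ℓ : Fin n) : ℕ) < n - ℓ ↔ ¬ (a : ℕ) < ℓ := by
    rcases lt_or_ge (a : ℕ) ℓ with h | h
    · rw [Fin.coe_sub_iff_lt.2 (by rw [Fin.lt_def, hval]; exact h)]; omega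
    · rw [Fin.coe_sub_iff_le.2 (by rw [Fin.le_def, hval]; exact h)]; omega
  rw [Multiset.card_eq_countP_add_countP (fun a : Fin n => (a : ℕ) < ℓ), Multiset.countP_map,
    ← Multiset.countP_eq_card_filter]
  simp only [hcompl]

/-- `arcCount x (t, ℓ)` is the number of elements of `x` in the cyclic arc
`-t, -t + 1, …, -t + ℓ - 1`. -/
def arcCount (x : Multiset (Fin n)) (p : Fin n × ℕ) : ℕ :=
  (x.map (· + p.1)).countP (fun a : Fin n => (a : ℕ) < p.2)

theorem sum_range_gstat_Tmap_iterate (x : Multiset (Fin n)) {r : ℕ} (hr : 1 ≤ r)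
    (hrx : r ≤ Multiset.card x) :
    ∑ m ∈ range n, gstat n r ((Tmap n)^[m] x) = #{p ∈ univ ×ˢ Ioo 0 n | arcCount x p < r} := by
  rw [← Fin.sum_univ_eq_sum_range, card_filter, sum_product, Nat.cast_sum]
  refine sum_congr rfl fun t _ => ?_
  rw [Tmap_iterate, Fin.cast_val_eq_self,
    gstat_eq_card_filter hr (by rwa [Multiset.card_map]), card_filter]
  rfl

theorem arcCount_sub_add_arcCount (x : Multiset (Fin n)) (t : Fin n) {ℓ : ℕ} (hℓ : ℓ < n) :
    arcCount x (t - ℓ, n - ℓ) + arcCount x (t, ℓ) = Multiset.card x := by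
  rw [add_comm, ← Multiset.card_map (· + t) x, ← countP_val_lt_add_countP_map_sub _ hℓ,
    arcCount, arcCount, Multiset.map_map]
  congr 3
  ext a
  simp [sub_eq_add_neg, add_assoc]

end Rotation

theorem stmt_12_general (n k : ℕ) [NeZero n]
    (x : Multiset (Fin n)) (hx : Multiset.card x = k)
    (i j : ℕ) (hi1 : 1 ≤ i) (hik : i ≤ k) (hj1 : 1 ≤ j) (hjk : j ≤ k)
    (hij : i + j = k + 1) :
    (1 / (n : ℝ)) *
        ∑ m ∈ Finset.range n,
          (gstat n i ((Tmap n)^[m] x) + gstat n j ((Tmap n)^[m] x)) =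
      (n : ℝ) - 1 := by
  subst hx
  have hflip_mem : ∀ p ∈ univ ×ˢ Ioo 0 n, ((p.1 - p.2 : Fin n), n - p.2) ∈ univ ×ˢ Ioo 0 n := by
    simp only [mem_product, mem_univ, mem_Ioo, true_and]
    omega
  have hflip_flip : ∀ p ∈ univ ×ˢ Ioo 0 n,
      ((p.1 - p.2 - (n - p.2 : ℕ) : Fin n), n - (n - p.2)) = p := by
    simp only [Prod.forall, mem_product, mem_univ, mem_Ioo, true_and]
    intro t ℓ hℓ
    rw [sub_sub, ← Nat.cast_add, Nat.add_sub_cancel' hℓ.2.le, Fin.natCast_self, sub_zero,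
      Nat.sub_sub_self hℓ.2.le]
  have hflip_arcCount : ∀ p ∈ univ ×ˢ Ioo 0 n,
      arcCount x ((p.1 - p.2 : Fin n), n - p.2) + arcCount x p = Multiset.card x := by
    simp only [Prod.forall, mem_product, mem_univ, mem_Ioo, true_and]
    exact fun t ℓ hℓ => arcCount_sub_add_arcCount x t hℓ.2
  rw [sum_add_distrib, sum_range_gstat_Tmap_iterate x hi1 hik,
    sum_range_gstat_Tmap_iterate x hj1 hjk, ← Nat.cast_add,
    card_filter_lt_add_card_filter_lt_of_involution _ hflip_mem hflip_flip _ hflip_arcCount hij,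
    card_product, card_univ, Fintype.card_fin, Nat.card_Ioo, Nat.sub_zero, Nat.cast_mul,
    Nat.cast_pred (Nat.pos_of_neZero n), ← mul_assoc, one_div_mul_cancel (NeZero.ne _), one_mul]

theorem stmt_12 (n k : ℕ) [NeZero n] (hn : 2 ≤ n) (hk : 2 ≤ k)
    (x : Multiset (Fin n)) (hx : Multiset.card x = k)
    (i j : ℕ) (hi1 : 1 ≤ i) (hik : i ≤ k) (hj1 : 1 ≤ j) (hjk : j ≤ k)
    (hij : i + j = k + 1) :
    (1 / (n : ℝ)) *
        ∑ m ∈ Finset.range n,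
          (gstat n i ((Tmap n)^[m] x) + gstat n j ((Tmap n)^[m] x)) =
      (n : ℝ) - 1 :=
  stmt_12_general n k x hx i j hi1 hik hj1 hjk hij
end

section
/- Let X be the set of k-element multisets with elements in {0,1} and T : X → X the map swapping 0 ↔ 1 in every element. Let V be the span of all functions g_i ∘ T^j (1 ≤ i ≤ k, j ∈ {0,1}) where g_i(x) is the i-th smallest element, and let U : V → V be given by Uf = f ∘ T. Then the multiplicity of the eigenvalue 1 of U is ⌈(k+1)/2⌉ and the multiplicity of the eigenvalue −1 is ⌊(k+1)/2⌋. -/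
/-- `X` is the set of `k`-element multisets with elements in `{0,1}`. -/
abbrev XX (k : ℕ) := {x : Multiset (Fin 2) // Multiset.card x = k}

/-- `T` swaps `0 ↔ 1` in every element (i.e. adds 1 mod 2 to each element). -/
def Tk (k : ℕ) (x : XX k) : XX k :=
  ⟨x.1.map (· + 1), by simp [x.2]⟩

/-- `gst k i x` is the `i`-th smallest element of `x` (1-based), as a real number. -/
def gst (k : ℕ) (i : ℕ) (x : XX k) : ℝ :=
  ((((x.1.sort (· ≤ ·)).getD (i - 1) 0 : Fin 2) : ℕ) : ℝ)

/-- The time-evolution operator `U f = f ∘ T` on the space of all functions `X → ℝ`. -/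
def Ubig (k : ℕ) : Module.End ℝ (XX k → ℝ) where
  toFun f := f ∘ Tk k
  map_add' := by intros; rfl
  map_smul' := by intros; rfl

/-- `V` is the span of the functions `g_i ∘ T^j` for `1 ≤ i ≤ k`, `j ∈ {0,1}`. -/
def Vspan (k : ℕ) : Submodule ℝ (XX k → ℝ) :=
  Submodule.span ℝ
    {f | ∃ i : Fin k, ∃ j : Fin 2, f = fun x => gst k (i.val + 1) ((Tk k)^[j.val] x)}

/-!
Counting ones identifies `X` with `{0, …, k}`, `T` with `j ↦ k - j`, and `gᵢ` with the indicator
of `{j ≥ k + 1 - i}`. Differences of consecutive `gᵢ`, together with `g₁ ∘ T`, give every point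
indicator, so `V` is the whole function space, of dimension `k + 1`. As `U² = 1`, this space is the
direct sum of the eigenspaces `E₁` and `E₋₁`. A function in `E₁` is determined by its values on
`{j ≤ k / 2}`, one in `E₋₁` by its values on `{j < k / 2}` (it vanishes at the fixed point
`j = k / 2`), so `dim E₁ ≤ ⌊k / 2⌋ + 1` and `dim E₋₁ ≤ ⌈k / 2⌉`; the bounds add up to `k + 1`,
hence both are equalities.
-/

open Module Module.End

section Involution

variable {K V : Type*} [Field K] [NeZero (2 : K)] [AddCommGroup V] [Module K V]

theorem eigenspace_one_inf_eigenspace_neg_one (U : End K V) :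
    eigenspace U 1 ⊓ eigenspace U (-1) = ⊥ := by
  refine eq_bot_iff.2 fun v ⟨h₁, h₂⟩ => ?_
  rw [SetLike.mem_coe, mem_eigenspace_iff] at h₁ h₂
  have : (1 : K) • v = (-1 : K) • v := h₁.symm.trans h₂
  rw [one_smul, neg_one_smul, eq_neg_iff_add_eq_zero, ← two_smul K] at this
  exact (smul_eq_zero.1 this).resolve_left two_ne_zero

theorem eigenspace_one_sup_eigenspace_neg_one {U : End K V} (hU : U * U = 1) :
    eigenspace U 1 ⊔ eigenspace U (-1) = ⊤ := by
  refine eq_top_iff.2 fun v _ => ?_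
  have hUU : U (U v) = v := congr($hU v)
  have hv : v = (2⁻¹ : K) • (v + U v) + (2⁻¹ : K) • (v - U v) := by
    rw [← smul_add, add_add_sub_cancel, ← two_smul K, smul_smul, inv_mul_cancel₀ two_ne_zero,
      one_smul]
  rw [hv]
  refine Submodule.add_mem_sup (Submodule.smul_mem _ _ ?_) (Submodule.smul_mem _ _ ?_) <;>
    rw [mem_eigenspace_iff] <;> simp only [map_add, map_sub, hUU] <;> module

theorem finrank_eigenspace_one_add_finrank_eigenspace_neg_one [FiniteDimensional K V]
    {U : End K V} (hU : U * U = 1) :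
    finrank K (eigenspace U 1) + finrank K (eigenspace U (-1)) = finrank K V := by
  rw [← Submodule.finrank_sup_add_finrank_inf_eq, eigenspace_one_sup_eigenspace_neg_one hU,
    eigenspace_one_inf_eigenspace_neg_one, finrank_top, finrank_bot, add_zero]

end Involution

section FunLeft

variable {K α ι : Type*} [Field K] [Fintype ι] {σ : α → α}

theorem finrank_eigenspace_funLeft_one_le (c : ι → α)
    (hc : ∀ x, x ∈ Set.range c ∨ σ x ∈ Set.range c) :
    finrank K (eigenspace (LinearMap.funLeft K K σ) 1) ≤ Fintype.card ι := by
  rw [← finrank_fintype_fun_eq_card K]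
  refine LinearMap.finrank_le_finrank_of_injective (f := (LinearMap.funLeft K K c).comp
    (eigenspace _ 1).subtype) ((injective_iff_map_eq_zero _).2 fun ⟨f, hf⟩ hfc => ?_)
  have hσ : ∀ x, f (σ x) = f x := fun x => by simpa using congr_fun (mem_eigenspace_iff.1 hf) x
  have hfc : ∀ i, f (c i) = 0 := congr_fun hfc
  ext x
  obtain ⟨i, rfl⟩ | ⟨i, hi⟩ := hc x
  · exact hfc i
  · show f x = 0
    rw [← hσ, ← hi, hfc]

theorem finrank_eigenspace_funLeft_neg_one_le [NeZero (2 : K)] (c : ι → α)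
    (hc : ∀ x, x ∈ Set.range c ∨ σ x ∈ Set.range c ∨ σ x = x) :
    finrank K (eigenspace (LinearMap.funLeft K K σ) (-1)) ≤ Fintype.card ι := by
  rw [← finrank_fintype_fun_eq_card K]
  refine LinearMap.finrank_le_finrank_of_injective (f := (LinearMap.funLeft K K c).comp
    (eigenspace _ (-1)).subtype) ((injective_iff_map_eq_zero _).2 fun ⟨f, hf⟩ hfc => ?_)
  have hσ : ∀ x, f (σ x) = -f x := fun x => by simpa using congr_fun (mem_eigenspace_iff.1 hf) x
  have hfc : ∀ i, f (c i) = 0 := congr_fun hfc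
  ext x
  obtain ⟨i, rfl⟩ | ⟨i, hi⟩ | hx := hc x
  · exact hfc i
  · show f x = 0
    rw [← neg_eq_zero, ← hσ, ← hi, hfc]
  · have := hσ x
    rw [hx, eq_neg_iff_add_eq_zero, ← two_mul, mul_eq_zero] at this
    exact this.resolve_left two_ne_zero

end FunLeft

theorem Multiset.count_zero_add_count_one (s : Multiset (Fin 2)) :
    s.count 0 + s.count 1 = Multiset.card s := by
  rw [← Fin.sum_univ_two (fun i => s.count i), Multiset.sum_count_eq_card (by simp)]

def numOnes (k : ℕ) : XX k ≃ Fin (k + 1) where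
  toFun x := ⟨x.1.count 1, Nat.lt_succ_of_le (x.2 ▸ Multiset.count_le_card 1 x.1 :)⟩
  invFun j := ⟨.replicate (k - j) 0 + .replicate j 1, by simp; omega⟩
  left_inv x := by
    have := Multiset.count_zero_add_count_one x.1
    refine Subtype.ext (Multiset.ext.2 fun a => ?_)
    fin_cases a <;> simp [Multiset.count_replicate]
    omega
  right_inv j := by ext; simp [Multiset.count_replicate]

instance (k : ℕ) : Fintype (XX k) := Fintype.ofEquiv _ (numOnes k).symm

theorem card_XX (k : ℕ) : Fintype.card (XX k) = k + 1 := by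
  rw [Fintype.card_congr (numOnes k), Fintype.card_fin]

theorem numOnes_Tk {k : ℕ} (x : XX k) : (numOnes k (Tk k x) : ℕ) = k - numOnes k x := by
  have := Multiset.count_zero_add_count_one x.1
  have hmap := Multiset.count_map_eq_count' (· + (1 : Fin 2)) x.1 (add_left_injective 1) 0
  rw [zero_add] at hmap
  simp only [numOnes, Tk, Equiv.coe_fn_mk, hmap, ← x.2]
  omega

theorem Tk_involutive (k : ℕ) : Function.Involutive (Tk k) := fun x =>
  (numOnes k).injective <| Fin.ext <| by
    rw [numOnes_Tk, numOnes_Tk]; have := (numOnes k x).isLt; omega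

theorem sort_eq_replicate_append_replicate {k : ℕ} (x : XX k) :
    x.1.sort (· ≤ ·) =
      List.replicate (k - numOnes k x) 0 ++ List.replicate (numOnes k x) 1 := by
  conv_lhs => rw [← (numOnes k).symm_apply_apply x]
  simp only [numOnes, Equiv.coe_fn_mk, Equiv.coe_fn_symm_mk, ← Multiset.coe_replicate,
    Multiset.coe_add, Multiset.coe_sort]
  refine List.mergeSort_eq_self _ ?_
  simp [List.pairwise_append, List.pairwise_replicate]

theorem gst_eq_ite {k i : ℕ} (hi : 1 ≤ i) (hik : i ≤ k) (x : XX k) :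
    gst k i x = if k + 1 - i ≤ numOnes k x then 1 else 0 := by
  have := (numOnes k x).isLt
  rw [gst, sort_eq_replicate_append_replicate]
  simp [List.getD_eq_getElem?_getD, List.getElem?_append, List.getElem?_replicate]
  split_ifs <;> simp <;> omega

theorem gst_mem_Vspan {k i : ℕ} (hi : 1 ≤ i) (hik : i ≤ k) : gst k i ∈ Vspan k :=
  Submodule.subset_span ⟨⟨i - 1, by omega⟩, 0, by simp only [Nat.sub_add_cancel hi]; rfl⟩

theorem gst_comp_Tk_mem_Vspan {k i : ℕ} (hi : 1 ≤ i) (hik : i ≤ k) : gst k i ∘ Tk k ∈ Vspan k :=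
  Submodule.subset_span ⟨⟨i - 1, by omega⟩, 1, by simp only [Nat.sub_add_cancel hi]; rfl⟩

theorem ite_le_numOnes_mem_Vspan {k : ℕ} (hk : 1 ≤ k) (j : ℕ) :
    (fun x => if j ≤ (numOnes k x : ℕ) then (1 : ℝ) else 0) ∈ Vspan k := by
  obtain rfl | hj := Nat.eq_zero_or_pos j
  · -- `1 = g₁ ∘ T + g_k`: the first summand detects `x = 0ᵏ`, the second one detects a `1` in `x`.
    convert add_mem (gst_comp_Tk_mem_Vspan le_rfl hk) (gst_mem_Vspan hk le_rfl) using 1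
    funext x
    have := (numOnes k x).isLt
    simp only [Function.comp_apply, Pi.add_apply, gst_eq_ite le_rfl hk, gst_eq_ite hk le_rfl,
      numOnes_Tk]
    split_ifs <;> norm_num <;> omega
  by_cases hjk : j ≤ k
  · convert gst_mem_Vspan (k := k) (i := k + 1 - j) (by omega) (by omega) using 1
    funext x
    rw [gst_eq_ite (i := k + 1 - j) (by omega) (by omega)]
    congr 2
    omega
  · convert zero_mem (Vspan k) using 1
    funext x
    have := (numOnes k x).isLt
    simp only [Pi.zero_apply, ite_eq_right_iff, one_ne_zero]
    omega

theorem single_mem_Vspan {k : ℕ} (hk : 1 ≤ k) (x : XX k) : Pi.single x (1 : ℝ) ∈ Vspan k := by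
  convert sub_mem (ite_le_numOnes_mem_Vspan hk (numOnes k x))
    (ite_le_numOnes_mem_Vspan hk (numOnes k x + 1)) using 1
  funext y
  simp only [Pi.single_apply, Pi.sub_apply, ← (numOnes k).injective.eq_iff, Fin.ext_iff]
  split_ifs <;> norm_num <;> omega

theorem Vspan_eq_top {k : ℕ} (hk : 1 ≤ k) : Vspan k = ⊤ := by
  rw [eq_top_iff, ← (Pi.basisFun ℝ (XX k)).span_eq, Submodule.span_le]
  rintro _ ⟨x, rfl⟩
  simpa using single_mem_Vspan hk x

theorem Ubig_mul_self (k : ℕ) : Ubig k * Ubig k = 1 :=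
  LinearMap.ext fun f => funext fun x => congrArg f (Tk_involutive k x)

theorem mem_range_numOnes_symm_castLE {k m : ℕ} (hm : m ≤ k + 1) {x : XX k}
    (hx : (numOnes k x : ℕ) < m) :
    x ∈ Set.range fun i : Fin m => (numOnes k).symm (Fin.castLE hm i) :=
  ⟨⟨numOnes k x, hx⟩, (numOnes k).symm_apply_eq.2 rfl⟩

theorem finrank_eigenspace_Ubig_one_le (k : ℕ) :
    finrank ℝ (eigenspace (Ubig k) 1) ≤ (k + 2) / 2 := by
  have hm : (k + 2) / 2 ≤ k + 1 := by omega
  refine (finrank_eigenspace_funLeft_one_le (fun i => (numOnes k).symm (Fin.castLE hm i))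
    fun x => ?_).trans_eq (Fintype.card_fin _)
  have := numOnes_Tk x
  by_cases h : 2 * (numOnes k x : ℕ) ≤ k
  · exact .inl (mem_range_numOnes_symm_castLE hm (by omega))
  · exact .inr (mem_range_numOnes_symm_castLE hm (by omega))

theorem finrank_eigenspace_Ubig_neg_one_le (k : ℕ) :
    finrank ℝ (eigenspace (Ubig k) (-1)) ≤ (k + 1) / 2 := by
  have hm : (k + 1) / 2 ≤ k + 1 := by omega
  refine (finrank_eigenspace_funLeft_neg_one_le (fun i => (numOnes k).symm (Fin.castLE hm i))
    fun x => ?_).trans_eq (Fintype.card_fin _)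
  have := numOnes_Tk x
  have := (numOnes k x).isLt
  rcases lt_trichotomy (2 * (numOnes k x : ℕ)) k with h | h | h
  · exact .inl (mem_range_numOnes_symm_castLE hm (by omega))
  · exact .inr (.inr ((numOnes k).injective (Fin.ext (by omega))))
  · exact .inr (.inl (mem_range_numOnes_symm_castLE hm (by omega)))

theorem stmt_13 (k : ℕ) (hk : 2 ≤ k) :
    Module.finrank ℝ ↥(Vspan k ⊓ Module.End.eigenspace (Ubig k) 1) = (k + 2) / 2 ∧
      Module.finrank ℝ ↥(Vspan k ⊓ Module.End.eigenspace (Ubig k) (-1)) = (k + 1) / 2 := by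
  rw [Vspan_eq_top (by omega), top_inf_eq, top_inf_eq]
  have hsum := finrank_eigenspace_one_add_finrank_eigenspace_neg_one (Ubig_mul_self k)
  rw [finrank_fintype_fun_eq_card, card_XX] at hsum
  have := finrank_eigenspace_Ubig_one_le k
  have := finrank_eigenspace_Ubig_neg_one_le k
  omega
end
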